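/- Let G be a finite group, g ∈ G, and k ≥ 1. If g lies in the k-th term F_k(G) of the Fitting series of G, then for every h ∈ G, g lies in F_k(⟨g, h⟩). -/

import Mathlib

/-- The Fitting subgroup: the join of all nilpotent normal subgroups. -/
def FittingSubgroup (G : Type*) [Group G] : Subgroup G :=
  ⨆ N : {N : Subgroup G // N.Normal ∧ Group.IsNilpotent N}, (N : Subgroup G)

theorem map_conj_of_normal {G : Type*} [Group G] {N : Subgroup G} (hN : N.Normal) (g : G) :
    N.map (MulAut.conj g).toMonoidHom = N := by
  apply le_antisymm
  · rintro x ⟨n, hn, rfl⟩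
    exact hN.conj_mem n hn g
  · intro n hn
    exact ⟨g⁻¹ * n * g, by simpa using hN.conj_mem n hn g⁻¹, by simp [MulAut.conj]; group⟩

instance FittingSubgroup.normal (G : Type*) [Group G] : (FittingSubgroup G).Normal := by
  constructor
  intro n hn g
  have h : (FittingSubgroup G).map (MulAut.conj g).toMonoidHom = FittingSubgroup G := by
    unfold FittingSubgroup
    rw [Subgroup.map_iSup]
    congr 1
    funext N
    exact map_conj_of_normal N.2.1 g
  rw [← h]
  exact ⟨n, hn, rfl⟩

/-- The Fitting series, bundled with normality:
`F 0 = ⊥` and `F (k+1) / F k = F(G / F k)`. -/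
def FittingSeriesAux (G : Type*) [Group G] : ℕ → {H : Subgroup G // H.Normal}
  | 0 => ⟨⊥, inferInstance⟩
  | (k+1) =>
      letI : (FittingSeriesAux G k : Subgroup G).Normal := (FittingSeriesAux G k).2
      ⟨(FittingSubgroup (G ⧸ (FittingSeriesAux G k : Subgroup G))).comap
          (QuotientGroup.mk' (FittingSeriesAux G k : Subgroup G)),
        (FittingSubgroup.normal _).comap _⟩

/-- The `k`-th term of the Fitting series of `G`. -/
def FittingSeries (G : Type*) [Group G] (k : ℕ) : Subgroup G := FittingSeriesAux G k

/-!
The Fitting series only grows when passing to a subgroup: `F_k(G) ∩ H ≤ F_k(H)` for `H ≤ G`.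
For `k = 1`: by Fitting's theorem `F(G)` is itself nilpotent, so `F(G) ∩ H` is a nilpotent
normal subgroup of `H`. Inductively, `H ⧸ (F_k(G) ∩ H)` embeds into `G ⧸ F_k(G)` and maps onto
`H ⧸ F_k(H)`, and the Fitting subgroup pulls back along embeddings and pushes forward along
surjections.

Fitting's theorem goes through Sylow subgroups: if `G = N ⊔ M` with `N`, `M` normal and
nilpotent, the (characteristic) Sylow `p`-subgroups of `N` and `M` generate a normal `p`-subgroup
of `G` whose index divides the product of their relative indices, so it is a normal Sylow
subgroup of `G`.
-/

open Group

namespace Subgroup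

variable {G : Type*} [Group G]

theorem index_dvd_relIndex_mul_relIndex {N M R : Subgroup G} [N.Normal] [R.Normal]
    (h : N ⊔ M = ⊤) : R.index ∣ R.relIndex N * R.relIndex M := by
  have hRNM : (R ⊔ N).index = (R ⊔ N).relIndex M := by
    rw [← relIndex_top_right, ← relIndex_sup_left M (R ⊔ N), sup_assoc, h, sup_top_eq]
  rw [← relIndex_mul_index (le_sup_left : R ≤ R ⊔ N), relIndex_sup_left N R, hRNM]
  exact mul_dvd_mul_left _ (relIndex_dvd_of_le_left M le_sup_left)

theorem relIndex_map_subtype {H : Subgroup G} (K : Subgroup H) :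
    (K.map H.subtype).relIndex H = K.index := by
  rw [relIndex, subgroupOf, comap_map_eq_self_of_injective H.subtype_injective]

variable [Finite G] (p : ℕ) [Fact p.Prime]

theorem exists_normal_isPGroup_of_isNilpotent (N : Subgroup G) [N.Normal] [IsNilpotent N] :
    ∃ P : Subgroup G, P.Normal ∧ IsPGroup p P ∧ ¬ p ∣ P.relIndex N := by
  obtain ⟨P⟩ := (inferInstance : Nonempty (Sylow p N))
  have : (P : Subgroup N).Characteristic := P.characteristic_of_normal inferInstance
  exact ⟨(P : Subgroup N).map N.subtype, inferInstance, P.isPGroup'.map _,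
    relIndex_map_subtype (P : Subgroup N) ▸ P.not_dvd_index⟩

theorem isNilpotent_of_sup_eq_top {N M : Subgroup G} [N.Normal] [M.Normal]
    [IsNilpotent N] [IsNilpotent M] (h : N ⊔ M = ⊤) : IsNilpotent G := by
  refine Group.isNilpotent_of_finite_tfae.out 3 0 |>.mp ?_
  intro p _ S
  obtain ⟨P, _, hP, hPi⟩ := exists_normal_isPGroup_of_isNilpotent p N
  obtain ⟨Q, _, hQ, hQi⟩ := exists_normal_isPGroup_of_isNilpotent p M
  have hR : IsPGroup p (P ⊔ Q : Subgroup G) := hP.to_sup_of_normal_right hQ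
  have hRi : ¬ p ∣ (P ⊔ Q).index := fun hdvd ↦
    (Nat.Prime.not_dvd_mul Fact.out hPi hQi) <| hdvd.trans <|
      (index_dvd_relIndex_mul_relIndex h).trans <| mul_dvd_mul
        (relIndex_dvd_of_le_left N le_sup_left) (relIndex_dvd_of_le_left M le_sup_right)
  have := Sylow.unique_of_normal (hR.toSylow hRi) (inferInstanceAs (P ⊔ Q).Normal)
  rw [Subsingleton.elim S (hR.toSylow hRi)]
  exact inferInstanceAs (P ⊔ Q).Normal

theorem isNilpotent_sup {N M : Subgroup G} [N.Normal] [M.Normal] [IsNilpotent N]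
    [IsNilpotent M] : IsNilpotent (N ⊔ M : Subgroup G) := by
  have : IsNilpotent (N.subgroupOf (N ⊔ M)) :=
    Group.nilpotent_of_mulEquiv (subgroupOfEquivOfLe le_sup_left).symm
  have : IsNilpotent (M.subgroupOf (N ⊔ M)) :=
    Group.nilpotent_of_mulEquiv (subgroupOfEquivOfLe le_sup_right).symm
  exact isNilpotent_of_sup_eq_top (N := N.subgroupOf (N ⊔ M)) (M := M.subgroupOf (N ⊔ M)) <| by
    rw [← subgroupOf_sup le_sup_left le_sup_right, subgroupOf_self]

end Subgroup

open Subgroup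

section Fitting

variable {G H : Type*} [Group G] [Group H]

theorem le_fittingSubgroup (N : Subgroup G) [hN : N.Normal] [hN' : IsNilpotent N] :
    N ≤ FittingSubgroup G :=
  le_iSup (fun N : {N : Subgroup G // N.Normal ∧ IsNilpotent N} ↦ (N : Subgroup G)) ⟨N, hN, hN'⟩

theorem isNilpotent_fittingSubgroup [Finite G] : IsNilpotent (FittingSubgroup G) := by
  let S : Set (Subgroup G) := {N | N.Normal ∧ IsNilpotent N}
  have hS : SupClosed S := fun N ⟨_, _⟩ M ⟨_, _⟩ ↦ ⟨sup_normal N M, isNilpotent_sup⟩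
  have hF : FittingSubgroup G = sSup S := (sSup_eq_iSup' S).symm
  exact hF ▸ (hS.sSup_mem S.toFinite ⟨normal_bot, inferInstance⟩ subset_rfl).2

theorem comap_fittingSubgroup_le [Finite G] (f : H →* G) (hf : Function.Injective f) :
    (FittingSubgroup G).comap f ≤ FittingSubgroup H := by
  have := isNilpotent_fittingSubgroup (G := G)
  have hinj : Function.Injective (f.subgroupComap (FittingSubgroup G)) := fun x y hxy ↦
    Subtype.ext (hf (congrArg Subtype.val hxy))
  have := Group.nilpotent_of_mulEquiv (MonoidHom.ofInjective hinj).symm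
  exact le_fittingSubgroup _

theorem map_fittingSubgroup_le [Finite G] (f : G →* H) (hf : Function.Surjective f) :
    (FittingSubgroup G).map f ≤ FittingSubgroup H := by
  have := isNilpotent_fittingSubgroup (G := G)
  have := Group.nilpotent_of_surjective _ (f.subgroupMap_surjective (FittingSubgroup G))
  have : ((FittingSubgroup G).map f).Normal := (FittingSubgroup.normal G).map f hf
  exact le_fittingSubgroup _

instance fittingSeries_normal (k : ℕ) : (FittingSeries G k).Normal :=
  (FittingSeriesAux G k).2

theorem mem_fittingSeries_succ {k : ℕ} {x : G} : x ∈ FittingSeries G (k + 1) ↔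
    (x : G ⧸ FittingSeries G k) ∈ FittingSubgroup (G ⧸ FittingSeries G k) :=
  Iff.rfl

theorem comap_fittingSeries_le [Finite G] (f : H →* G) (hf : Function.Injective f) (k : ℕ) :
    (FittingSeries G k).comap f ≤ FittingSeries H k := by
  have : Finite H := Finite.of_injective f hf
  induction k with
  | zero => exact fun x hx ↦ hf (hx.trans (map_one f).symm)
  | succ k ih =>
    intro x hx
    set φ := (QuotientGroup.mk' (FittingSeries G k)).comp f
    have hker : φ.ker ≤ FittingSeries H k := by
      rw [← MonoidHom.comap_ker, QuotientGroup.ker_mk']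
      exact ih
    have hφx : QuotientGroup.kerLift φ x ∈ FittingSubgroup (G ⧸ FittingSeries G k) :=
      mem_fittingSeries_succ.mp hx
    have hy : (x : H ⧸ φ.ker) ∈ FittingSubgroup (H ⧸ φ.ker) :=
      comap_fittingSubgroup_le _ (QuotientGroup.kerLift_injective φ) hφx
    have hπ := QuotientGroup.map_surjective_of_surjective φ.ker (FittingSeries H k) (MonoidHom.id H)
      (QuotientGroup.mk'_surjective _) hker
    exact mem_fittingSeries_succ.mpr (map_fittingSubgroup_le _ hπ (mem_map_of_mem _ hy))

end Fitting

theorem stmt_14_general {G : Type*} [Group G] [Finite G] (g : G) (k : ℕ)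
    (hg : g ∈ FittingSeries G k) :
    ∀ h : G,
      g ∈ (FittingSeries (Subgroup.closure {g, h}) k).map
        (Subgroup.closure {g, h}).subtype := by
  intro h
  have hg' : g ∈ closure {g, h} := subset_closure (Set.mem_insert g {h})
  exact ⟨⟨g, hg'⟩, comap_fittingSeries_le _ (subtype_injective _) k hg, rfl⟩

theorem stmt_14 {G : Type*} [Group G] [Finite G] (g : G) (k : ℕ) (hk : 1 ≤ k)
    (hg : g ∈ FittingSeries G k) :
    ∀ h : G,
      g ∈ (FittingSeries (Subgroup.closure {g, h}) k).map
        (Subgroup.closure {g, h}).subtype :=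
  stmt_14_general g k hg
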